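/- arXiv:2603.18038 — 3 statements merged into one kernel-verified Lean document; each statement's English description precedes it below -/
import Mathlib

section
/- If (x*, b*) ∈ E is a global minimizer of G over E, then G(x*, b*) = F(x*), i.e., Σ_{i ∈ I} A x* i / b* i = Σ_{i ∈ I} A x* i / B x* i. -/
/-- Equation (35) in the proof of Lemma 1: if `(x*, b*)` is a global minimizer of `G`
over the relaxed feasible set `E`, then `G (x*, b*) = F x*`. -/
theorem minimizer_objective_eq
    (D I : Type) [Fintype D] [Nonempty D] [Fintype I] [Nonempty I]
    (A B : D → I → ℝ)
    (hA : ∀ x i, 0 ≤ A x i) (hB : ∀ x i, 0 < B x i)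
    (xs : D) (bs : I → ℝ)
    (hfeas : ∀ i, 0 < bs i ∧ bs i ≤ B xs i)
    (hmin : ∀ (x : D) (b : I → ℝ), (∀ i, 0 < b i ∧ b i ≤ B x i) →
      ∑ i, A xs i / bs i ≤ ∑ i, A x i / b i) :
    ∑ i, A xs i / bs i = ∑ i, A xs i / B xs i := by
  apply le_antisymm
  · exact hmin xs (B xs) (fun i => ⟨hB xs i, le_rfl⟩)
  · apply Finset.sum_le_sum
    intro i _
    exact div_le_div_of_nonneg_left (hA xs i) (hfeas i).1 (hfeas i).2
end

section
/- If (x*, b*) ∈ E is a global minimizer of G over E, then x* is a global minimizer of F over D: for every x ∈ D, F(x*) ≤ F(x). -/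
/-- Forward direction of the equivalence in Lemma 1: if `(x*, b*)` is a global
minimizer of `G` over the relaxed feasible set `E`, then `x*` is a global minimizer of
`F` over `D`. -/
theorem relaxed_minimizer_is_original_minimizer
    (D I : Type) [Fintype D] [Nonempty D] [Fintype I] [Nonempty I]
    (A B : D → I → ℝ)
    (hA : ∀ x i, 0 ≤ A x i) (hB : ∀ x i, 0 < B x i)
    (xs : D) (bs : I → ℝ)
    (hfeas : ∀ i, 0 < bs i ∧ bs i ≤ B xs i)
    (hmin : ∀ (x : D) (b : I → ℝ), (∀ i, 0 < b i ∧ b i ≤ B x i) →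
      ∑ i, A xs i / bs i ≤ ∑ i, A x i / b i) :
    ∀ x : D, ∑ i, A xs i / B xs i ≤ ∑ i, A x i / B x i := by
  intro x
  have h1 : ∑ i, A xs i / B xs i ≤ ∑ i, A xs i / bs i := by
    apply Finset.sum_le_sum
    intro i _
    exact div_le_div_of_nonneg_left (hA xs i) (hfeas i).1 (hfeas i).2
  have h2 := hmin x (B x) (fun i => ⟨hB x i, le_refl _⟩)
  linarith
end

section
/- If x* ∈ D is a global minimizer of F over D, then (x*, b*) with b* i = B x* i for all i ∈ I is a global minimizer of G over E: for every (x,b) ∈ E, G(x*, b*) ≤ G(x,b). -/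
/-- Converse direction of the equivalence in Lemma 1: if `x*` is a global minimizer of
`F` over `D`, then `(x*, b*)` with `b* i = B x* i` is a global minimizer of `G` over
the relaxed feasible set `E`. -/
theorem original_minimizer_is_relaxed_minimizer
    (D I : Type) [Fintype D] [Nonempty D] [Fintype I] [Nonempty I]
    (A B : D → I → ℝ)
    (hA : ∀ x i, 0 ≤ A x i) (hB : ∀ x i, 0 < B x i)
    (xs : D)
    (hmin : ∀ x : D, ∑ i, A xs i / B xs i ≤ ∑ i, A x i / B x i) :
    ∀ (x : D) (b : I → ℝ), (∀ i, 0 < b i ∧ b i ≤ B x i) →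
      ∑ i, A xs i / B xs i ≤ ∑ i, A x i / b i := by
  intro x b hb
  refine (hmin x).trans (Finset.sum_le_sum fun i _ => ?_)
  exact div_le_div_of_nonneg_left (hA x i) (hb i).1 (hb i).2
end
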